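/- arXiv:1203.0493 — 4 statements merged into one kernel-verified Lean document; each statement's English description precedes it below -/
import Mathlib

section
/- For B ∈ ∧²V*, the B-field action on 𝕍 is compatible with the spinor action: for any v ∈ 𝕍 and φ ∈ ∧•V*, (e^B_* v)·(e^B ∧ φ) = e^B ∧ (v·φ), where e^B_*(X+ξ) = X + ξ − i_X B and e^B ∧ φ denotes wedging with the exponential of B. -/
/-!
STATEMENT 2: For `B ∈ ∧²V*`, the B-field action on `𝕍` is compatible with the
spinor action: for any `v ∈ 𝕍` and `φ ∈ ∧•V*`,
`(e^B_* v)·(e^B ∧ φ) = e^B ∧ (v·φ)`,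
where `e^B_*(X+ξ) = X + ξ − i_X B` and `e^B` is the exponential of `B` in `∧•V*`.

Here `B` is encoded both as the skew map `B : V → V*` and as the degree-2
element `β ∈ ∧²V*` with `i_X β = ι(B X)` for every `X`.
-/

open Module ExteriorAlgebra

set_option synthInstance.maxHeartbeats 1000000
set_option maxHeartbeats 1600000

section Aux
variable {R M : Type*} [Field R] [AddCommGroup M] [Module R M]

/-- Degree-2 elements commute with degree-1 elements in the exterior algebra. -/
lemma aux_comm {b : ExteriorAlgebra R M}
    (hb : b ∈ (LinearMap.range (ExteriorAlgebra.ι R (M := M))) ^ 2) (c : M) :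
    b * ExteriorAlgebra.ι R c = ExteriorAlgebra.ι R c * b := by
  rw [pow_two] at hb
  refine Submodule.mul_induction_on hb ?_ ?_
  · rintro x ⟨a, rfl⟩ y ⟨e, rfl⟩
    have h1 : ∀ u w : M, ι R u * ι R w = -(ι R w * ι R u) := fun u w =>
      eq_neg_of_add_eq_zero_left (ExteriorAlgebra.ι_add_mul_swap u w)
    rw [mul_assoc, h1 e c, mul_neg, ← mul_assoc, h1 a c, neg_mul, neg_neg, mul_assoc]
  · intro x y hx hy
    rw [add_mul, mul_add, hx, hy]

/-- Contraction acts as a derivation past a degree-2 element. -/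
lemma aux_der (d : Module.Dual R M) {b : ExteriorAlgebra R M}
    (hb : b ∈ (LinearMap.range (ExteriorAlgebra.ι R (M := M))) ^ 2)
    (x : ExteriorAlgebra R M) :
    CliffordAlgebra.contractLeft d (b * x) =
      CliffordAlgebra.contractLeft d b * x + b * CliffordAlgebra.contractLeft d x := by
  rw [pow_two] at hb
  refine Submodule.mul_induction_on hb ?_ ?_
  · rintro p ⟨a, rfl⟩ q ⟨e, rfl⟩
    simp only [mul_assoc, CliffordAlgebra.contractLeft_ι_mul, CliffordAlgebra.contractLeft_ι,
      smul_sub, mul_sub, sub_mul, smul_mul_assoc, mul_smul_comm, mul_assoc,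
      Algebra.algebraMap_eq_smul_one, mul_one, CliffordAlgebra.contractLeft_algebraMap,
      map_zero, mul_zero, sub_zero, smul_zero]
    abel
  · intro p q hp hq
    rw [add_mul, map_add, hp, hq, map_add, add_mul, add_mul]
    abel

/-- Elements of the `m`-th exterior power vanish for `m > finrank`. -/
lemma aux_zero [FiniteDimensional R M] {m : ℕ} (hm : Module.finrank R M < m)
    {w : ExteriorAlgebra R M}
    (hw : w ∈ (LinearMap.range (ExteriorAlgebra.ι R (M := M))) ^ m) : w = 0 := by
  have hsp : Submodule.span R (Set.range (ιMulti R m (M := M))) =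
      (LinearMap.range (ExteriorAlgebra.ι R (M := M))) ^ m :=
    ExteriorAlgebra.ιMulti_span_fixedDegree R m
  rw [← hsp] at hw
  refine Submodule.span_induction ?_ rfl (fun x y _ _ hx hy => by rw [hx, hy, add_zero])
    (fun r x _ hx => by rw [hx, smul_zero]) hw
  rintro x ⟨f, rfl⟩
  refine AlternatingMap.map_linearDependent _ f (fun h => ?_)
  have := h.fintype_card_le_finrank
  simp only [Fintype.card_fin] at this
  omega

end Aux


/-- The spinorial action of `𝕍 = V ⊕ V*` on `∧•V*`:
`(X+ξ)·φ = i_X φ + ξ ∧ φ`. -/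
noncomputable def spinAction {V : Type*} [AddCommGroup V] [Module ℝ V]
    (v : V × Module.Dual ℝ V) (φ : ExteriorAlgebra ℝ (Module.Dual ℝ V)) :
    ExteriorAlgebra ℝ (Module.Dual ℝ V) :=
  CliffordAlgebra.contractLeft (Module.Dual.eval ℝ V v.1) φ +
    ExteriorAlgebra.ι ℝ v.2 * φ

/-- The exponential `e^β = Σ β^k/k!` of a (nilpotent) exterior form; the sum is
finite since `β^k = 0` for `k > dim V`. -/
noncomputable def expForm {V : Type*} [AddCommGroup V] [Module ℝ V]
    [FiniteDimensional ℝ V] (β : ExteriorAlgebra ℝ (Module.Dual ℝ V)) :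
    ExteriorAlgebra ℝ (Module.Dual ℝ V) :=
  ∑ k ∈ Finset.range (Module.finrank ℝ V + 1), ((k.factorial : ℝ))⁻¹ • β ^ k

theorem bField_spinor_compatible {V : Type*} [AddCommGroup V] [Module ℝ V]
    [FiniteDimensional ℝ V]
    (B : V →ₗ[ℝ] Module.Dual ℝ V) (hskew : ∀ X Y : V, B X Y = - B Y X)
    (β : ExteriorAlgebra ℝ (Module.Dual ℝ V))
    (hβdeg : β ∈ (LinearMap.range (ExteriorAlgebra.ι ℝ (M := Module.Dual ℝ V)) :
        Submodule ℝ (ExteriorAlgebra ℝ (Module.Dual ℝ V))) ^ 2)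
    (hβ : ∀ X : V,
      CliffordAlgebra.contractLeft (Module.Dual.eval ℝ V X) β =
        ExteriorAlgebra.ι ℝ (B X))
    (v : V × Module.Dual ℝ V) (φ : ExteriorAlgebra ℝ (Module.Dual ℝ V)) :
    spinAction (v.1, v.2 - B v.1) (expForm β * φ) = expForm β * spinAction v φ := by
  classical
  set d := Module.Dual.eval ℝ V v.1 with hd
  set bx := ExteriorAlgebra.ι ℝ (B v.1) with hbx
  set n := Module.finrank ℝ V with hn
  set E := expForm β with hE
  have hβcomm : ∀ c : Module.Dual ℝ V, β * ExteriorAlgebra.ι ℝ c = ExteriorAlgebra.ι ℝ c * β :=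
    fun c => aux_comm hβdeg c
  have hder : ∀ x, CliffordAlgebra.contractLeft d (β * x) =
      bx * x + β * CliffordAlgebra.contractLeft d x := by
    intro x
    rw [aux_der d hβdeg x, hβ]
  have hc2 : ∀ y, β * (bx * y) = bx * (β * y) := by
    intro y
    rw [← mul_assoc, hβcomm (B v.1), mul_assoc]
  -- the derivation on powers
  have hpow : ∀ k x, CliffordAlgebra.contractLeft d (β ^ (k + 1) * x) =
      (k + 1) • (bx * (β ^ k * x)) + β ^ (k + 1) * CliffordAlgebra.contractLeft d x := by
    intro k
    induction k with
    | zero => intro x; simpa using hder x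
    | succ k ih =>
      intro x
      have h1 : β ^ (k + 2) * x = β * (β ^ (k + 1) * x) := by
        rw [← mul_assoc, ← pow_succ']
      have h3 : β * (β ^ (k + 1) * CliffordAlgebra.contractLeft d x) =
          β ^ (k + 2) * CliffordAlgebra.contractLeft d x := by
        rw [← mul_assoc, ← pow_succ']
      have h4 : β * (β ^ k * x) = β ^ (k + 1) * x := by
        rw [← mul_assoc, ← pow_succ']
      rw [h1, hder, ih, mul_add, mul_smul_comm, hc2, h4, h3,
        succ_nsmul (bx * (β ^ (k + 1) * x)) (k + 1)]
      abel
  -- vanishing of the top term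
  have htop : bx * β ^ n = 0 := by
    refine aux_zero (m := 2 * n + 1) ?_ ?_
    · rw [Subspace.dual_finrank_eq]; omega
    · have h1 : bx ∈ (LinearMap.range (ExteriorAlgebra.ι ℝ (M := Module.Dual ℝ V))) ^ 1 := by
        rw [pow_one]; exact LinearMap.mem_range_self _ _
      have h2 : β ^ n ∈
          ((LinearMap.range (ExteriorAlgebra.ι ℝ (M := Module.Dual ℝ V))) ^ 2) ^ n :=
        Submodule.pow_mem_pow _ hβdeg n
      rw [← pow_mul] at h2
      have h3 := Submodule.mul_mem_mul h1 h2
      rwa [← pow_add, show 1 + 2 * n = 2 * n + 1 by omega] at h3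
  -- multiplying by the exponential, as a sum
  have hEφ : ∀ ψ : ExteriorAlgebra ℝ (Module.Dual ℝ V), E * ψ =
      ∑ k ∈ Finset.range (n + 1), ((k.factorial : ℝ))⁻¹ • (β ^ k * ψ) := by
    intro ψ
    rw [hE]
    unfold expForm
    rw [← hn, Finset.sum_mul]
    simp only [smul_mul_assoc]
  -- key derivation identity for the exponential
  have key : CliffordAlgebra.contractLeft d (E * φ) =
      bx * (E * φ) + E * CliffordAlgebra.contractLeft d φ := by
    have hfac : ∀ k : ℕ, (((k + 1).factorial : ℝ))⁻¹ • ((k + 1) • (bx * (β ^ k * φ)))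
        = ((k.factorial : ℝ))⁻¹ • (bx * (β ^ k * φ)) := by
      intro k
      rw [← Nat.cast_smul_eq_nsmul ℝ, smul_smul]
      congr 1
      rw [Nat.factorial_succ]
      push_cast
      rw [mul_inv]
      field_simp
    have hsplit : ∑ k ∈ Finset.range n, ((k.factorial : ℝ))⁻¹ • (bx * (β ^ k * φ))
        = bx * (E * φ) := by
      rw [hEφ φ, Finset.mul_sum]
      simp only [mul_smul_comm]
      rw [Finset.sum_range_succ]
      have hz : bx * (β ^ n * φ) = 0 := by rw [← mul_assoc, htop, zero_mul]
      rw [hz, smul_zero, add_zero]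
    have hrest : (∑ k ∈ Finset.range n,
          (((k + 1).factorial : ℝ))⁻¹ • (β ^ (k + 1) * CliffordAlgebra.contractLeft d φ))
        + CliffordAlgebra.contractLeft d φ
        = E * CliffordAlgebra.contractLeft d φ := by
      rw [hEφ _, Finset.sum_range_succ']
      simp only [pow_zero, one_mul, Nat.factorial_zero, Nat.cast_one, inv_one, one_smul]
    rw [hEφ φ, map_sum]
    simp only [map_smul]
    rw [Finset.sum_range_succ']
    simp only [hpow, smul_add]
    rw [Finset.sum_add_distrib]
    simp only [hfac, pow_zero, one_mul, Nat.factorial_zero, Nat.cast_one, inv_one, one_smul]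
    rw [hsplit, ← hrest, ← hEφ φ, add_assoc]
  -- E commutes with degree-1 elements
  have hEcomm : ∀ c : Module.Dual ℝ V,
      E * ExteriorAlgebra.ι ℝ c = ExteriorAlgebra.ι ℝ c * E := by
    intro c
    have hC : Commute (ExteriorAlgebra.ι ℝ c) β := (hβcomm c).symm
    rw [hE]
    unfold expForm
    rw [Finset.sum_mul, Finset.mul_sum]
    refine Finset.sum_congr rfl fun k _ => ?_
    rw [smul_mul_assoc, mul_smul_comm]
    congr 1
    exact (hC.pow_right k).symm
  -- finish
  simp only [spinAction, ← hE]
  rw [key, map_sub, sub_mul]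
  conv_rhs => rw [mul_add, ← mul_assoc, hEcomm v.2, mul_assoc]
  rw [← hbx, ← hd]
  have habc : ∀ X b c : ExteriorAlgebra ℝ (Module.Dual ℝ V), X + b + (c - X) = b + c :=
    fun X b c => by abel
  exact habc _ _ _
end

section
/- The Nijenhuis tensor of an almost generalized complex structure is totally skew: if L is the +i-eigenspace of 𝒥 and N(X,Y,Z) = −2⟨⟦X,Y⟧, Z⟩ for sections X, Y, Z of L̄, then N is C∞-linear in each argument and is alternating, i.e. N defines a section of ∧³L (using L ≅ L̄*). -/
/-!
STATEMENT 12: The Nijenhuis tensor of an almost generalized complex structure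
is totally skew: for sections `X, Y, Z` of `L̄` (the `−i`-eigenbundle, isotropic
for the pairing), `N(X,Y,Z) = −2⟨⟦X,Y⟧, Z⟩` is `C∞`-linear in each argument
and alternating, hence defines a section of `∧³L` (using `L ≅ L̄*`).

The module of sections of `𝕋M ⊗ ℂ` with the `H`-Courant (Dorfman) bracket,
pairing and anchor is abstracted in `CourantAlgebra` below; its axioms are the
standard properties of the `H`-Courant bracket recalled in the paper.
-/

/-- An abstraction of (complexified sections of) `𝕋M = TM ⊕ T*M` over the ring
`A` of smooth functions, with the `H`-Courant (Dorfman) bracket `br`, the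
natural pairing `p`, the anchor-derivative `D X f = L_{π(X)} f` and the
"exterior derivative" `δ f = df`. -/
structure CourantAlgebra (A : Type*) (E : Type*) [CommRing A] [AddCommGroup E]
    [Module A E] where
  /-- the natural pairing -/
  p : E →ₗ[A] E →ₗ[A] A
  p_symm : ∀ u v, p u v = p v u
  /-- the Courant bracket -/
  br : E → E → E
  br_add_left : ∀ u v w, br (u + v) w = br u w + br v w
  br_add_right : ∀ u v w, br u (v + w) = br u v + br u w
  /-- the anchor: `D X f = L_{π(X)} f` -/
  D : E → A → A
  D_add : ∀ u f g, D u (f + g) = D u f + D u g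
  /-- `δ f = df ∈ T*M ⊂ 𝕋M` -/
  δ : A →+ E
  /-- Leibniz rule: `⟦X, fY⟧ = f⟦X,Y⟧ + (L_{π(X)}f) Y` -/
  leibniz : ∀ u v f, br u (f • v) = f • br u v + (D u f) • v
  /-- `⟦fX, Y⟧ = f⟦X,Y⟧ − (L_{π(Y)}f) X + 2⟨X,Y⟩ df` -/
  leibniz' : ∀ u v f, br (f • u) v = f • br u v - (D v f) • u + (2 * p u v) • δ f
  /-- invariance of the pairing:
  `π(X)⟨Y,Z⟩ = ⟨⟦X,Y⟧, Z⟩ + ⟨Y, ⟦X,Z⟧⟩` -/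
  invariance : ∀ u v w, D u (p v w) = p (br u v) w + p v (br u w)
  /-- the symmetric part of the Dorfman bracket: `⟦X,Y⟧ + ⟦Y,X⟧ = d(2⟨X,Y⟩)` -/
  symm_part : ∀ u v, br u v + br v u = δ (2 * p u v)

theorem nijenhuis_totally_skew
    {A E : Type*} [CommRing A] [AddCommGroup E] [Module A E]
    (C : CourantAlgebra A E)
    (Lbar : Submodule A E)
    (hiso : ∀ x ∈ Lbar, ∀ y ∈ Lbar, C.p x y = 0)
    -- the Nijenhuis tensor `N(X,Y,Z) = −2⟨⟦X,Y⟧,Z⟩`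
    (N : E → E → E → A)
    (hN : ∀ x y z, N x y z = - (2 * C.p (C.br x y) z)) :
    ∀ x ∈ Lbar, ∀ y ∈ Lbar, ∀ z ∈ Lbar,
      -- `C∞(M)`-linearity in each argument
      (∀ f : A, N (f • x) y z = f * N x y z) ∧
      (∀ f : A, N x (f • y) z = f * N x y z) ∧
      (∀ f : A, N x y (f • z) = f * N x y z) ∧
      -- alternating
      N x y z = - N y x z ∧
      N x y z = - N x z y := by
  intro x hx y hy z hz
  have hD0 : ∀ u : E, C.D u 0 = 0 := by
    intro u
    have := C.D_add u 0 0
    simpa using this.symm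
  have hxy : C.p x y = 0 := hiso x hx y hy
  have hxz : C.p x z = 0 := hiso x hx z hz
  have hyz : C.p y z = 0 := hiso y hy z hz
  refine ⟨?_, ?_, ?_, ?_, ?_⟩
  · intro f
    rw [hN, hN, C.leibniz']
    simp [hxy, hxz, map_smul, mul_add, mul_sub, mul_left_comm]
  · intro f
    rw [hN, hN, C.leibniz]
    simp [map_add, map_smul, hxz, hyz, mul_add]
    ring
  · intro f
    rw [hN, hN]
    simp [map_smul]
    ring
  · rw [hN, hN]
    have h := C.symm_part x y
    rw [hxy] at h
    simp at h
    have : C.br x y = - C.br y x := by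
      rw [eq_neg_iff_add_eq_zero]; exact h
    rw [this]
    simp
  · rw [hN, hN]
    have h := C.invariance x y z
    rw [hyz, hD0] at h
    have h2 : C.p (C.br x y) z = - C.p (C.br x z) y := by
      rw [C.p_symm y (C.br x z)] at h
      linear_combination -h
    rw [h2]; ring
end

section
/- A positive Hermitian structure (𝒢, ℐ₊) on V is parallel with respect to the operator ∇⁺ (defined by ∇⁺_w v = π₊⟦w, v⟧ for w ∈ Γ(V₋), v ∈ Γ(V₊)) if and only if ⟦Γ(V₊^{1,0}), Γ(V₊^{1,0})⟧ ⊆ Γ(V₊ ⊗ ℂ), where V₊^{1,0} is the +i-eigenspace of ℐ₊. -/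
/-!
Both conditions are read off the identity `⟨π₊⟦w, v₁⟧, v₂⟩ = ⟨w, ⟦v₁, v₂⟧⟩` for `w ∈ V₋`,
`v₁, v₂ ∈ V₊`, which comes from differentiating `⟨w, v₂⟩ = 0` along `v₁` and using that the
bracket is skew on orthogonal pairs. Since `V₊^{1,0}` is maximal isotropic in `V₊ ⊗ ℂ`,
`π₊⟦w, v₁⟧ ∈ V₊^{1,0}` for all `v₁` iff the left side vanishes on `V₊^{1,0}`; since `V₊ = V₋^⊥`,
`⟦v₁, v₂⟧ ∈ V₊` for all `v₁, v₂` iff the right side vanishes for all `w ∈ V₋`.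
-/

namespace CourantAlgebra

variable {A E : Type*} [CommRing A] [AddCommGroup E] [Module A E] (C : CourantAlgebra A E)

theorem D_zero (u : E) : C.D u 0 = 0 := by
  simpa using (C.D_add u 0 0).symm

theorem br_eq_neg_br_of_p_eq_zero {u v : E} (h : C.p u v = 0) : C.br u v = -C.br v u := by
  have hsymm := C.symm_part u v
  rw [h, mul_zero, map_zero] at hsymm
  exact eq_neg_of_add_eq_zero_left hsymm

theorem p_br_left_eq_p_br_right {w v₁ v₂ : E} (h₁ : C.p v₁ w = 0) (h₂ : C.p w v₂ = 0) :
    C.p (C.br w v₁) v₂ = C.p w (C.br v₁ v₂) := by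
  have hinv := C.invariance v₁ w v₂
  rw [h₂, D_zero, C.br_eq_neg_br_of_p_eq_zero h₁, map_neg, LinearMap.neg_apply] at hinv
  exact neg_add_eq_zero.mp hinv.symm

section Projection

variable {Vp Vm : Submodule A E} (horth : ∀ v ∈ Vp, ∀ w ∈ Vm, C.p v w = 0)
  {πp : E →ₗ[A] E} (hπ : ∀ u, u - πp u ∈ Vm)
include horth hπ

theorem p_proj_left {v : E} (hv : v ∈ Vp) (u : E) : C.p (πp u) v = C.p u v := by
  have hcompl : C.p (u - πp u) v = 0 := by
    rw [C.p_symm]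
    exact horth v hv _ (hπ u)
  rwa [map_sub, LinearMap.sub_apply, sub_eq_zero, eq_comm] at hcompl

theorem p_proj_br {w v₁ v₂ : E} (hw : w ∈ Vm) (hv₁ : v₁ ∈ Vp) (hv₂ : v₂ ∈ Vp) :
    C.p (πp (C.br w v₁)) v₂ = C.p w (C.br v₁ v₂) := by
  rw [C.p_proj_left horth hπ hv₂]
  refine C.p_br_left_eq_p_br_right (horth v₁ hv₁ w hw) ?_
  rw [C.p_symm]
  exact horth v₂ hv₂ w hw

end Projection

end CourantAlgebra

theorem parallel_iff_bracket_condition_general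
    {A E : Type*} [CommRing A] [AddCommGroup E] [Module A E]
    (C : CourantAlgebra A E)
    (Vp Vm : Submodule A E) (W : Submodule A E) (hWVp : W ≤ Vp)
    -- `V₊` and `V₋` are orthogonal, and `V₊ = V₋^⊥`
    (horth : ∀ v ∈ Vp, ∀ w ∈ Vm, C.p v w = 0)
    (hVmPerp : ∀ u : E, (∀ w ∈ Vm, C.p u w = 0) → u ∈ Vp)
    -- `W = V₊^{1,0}` is a maximal isotropic of `V₊ ⊗ ℂ`
    (hWiso : ∀ u ∈ W, ∀ v ∈ W, C.p u v = 0)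
    (hWmax : ∀ u ∈ Vp, (∀ v ∈ W, C.p u v = 0) → u ∈ W)
    -- orthogonal projection `π₊ : 𝕋M → V₊`
    (πp : E →ₗ[A] E)
    (hπ1 : ∀ u, πp u ∈ Vp) (hπ3 : ∀ u, u - πp u ∈ Vm) :
    -- `ℐ₊` is parallel for `∇⁺` iff `⟦W, W⟧ ⊆ Γ(V₊ ⊗ ℂ)`
    (∀ w ∈ Vm, ∀ v ∈ W, πp (C.br w v) ∈ W) ↔
      (∀ v₁ ∈ W, ∀ v₂ ∈ W, C.br v₁ v₂ ∈ Vp) := by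
  have key : ∀ w ∈ Vm, ∀ v₁ ∈ W, ∀ v₂ ∈ W,
      C.p (πp (C.br w v₁)) v₂ = C.p w (C.br v₁ v₂) := fun w hw v₁ hv₁ v₂ hv₂ =>
    C.p_proj_br horth hπ3 hw (hWVp hv₁) (hWVp hv₂)
  constructor
  · intro hpar v₁ hv₁ v₂ hv₂
    refine hVmPerp _ fun w hw => ?_
    rw [C.p_symm, ← key w hw v₁ hv₁ v₂ hv₂]
    exact hWiso _ (hpar w hw v₁ hv₁) v₂ hv₂
  · intro hbr w hw v₁ hv₁
    refine hWmax _ (hπ1 _) fun v₂ hv₂ => ?_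
    rw [key w hw v₁ hv₁ v₂ hv₂, C.p_symm]
    exact horth _ (hbr v₁ hv₁ v₂ hv₂) w hw

theorem parallel_iff_bracket_condition
    {A E : Type*} [CommRing A] [AddCommGroup E] [Module A E]
    (C : CourantAlgebra A E)
    (Vp Vm : Submodule A E) (W : Submodule A E) (hWVp : W ≤ Vp)
    -- `V₊` and `V₋` are orthogonal, and `V₊ = V₋^⊥`
    (horth : ∀ v ∈ Vp, ∀ w ∈ Vm, C.p v w = 0)
    (hVmPerp : ∀ u : E, (∀ w ∈ Vm, C.p u w = 0) → u ∈ Vp)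
    -- `W = V₊^{1,0}` is a maximal isotropic of `V₊ ⊗ ℂ`
    (hWiso : ∀ u ∈ W, ∀ v ∈ W, C.p u v = 0)
    (hWmax : ∀ u ∈ Vp, (∀ v ∈ W, C.p u v = 0) → u ∈ W)
    -- orthogonal projection `π₊ : 𝕋M → V₊`
    (πp : E →ₗ[A] E)
    (hπ1 : ∀ u, πp u ∈ Vp) (hπ2 : ∀ u ∈ Vp, πp u = u) (hπ3 : ∀ u, u - πp u ∈ Vm) :
    -- `ℐ₊` is parallel for `∇⁺` iff `⟦W, W⟧ ⊆ Γ(V₊ ⊗ ℂ)`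
    (∀ w ∈ Vm, ∀ v ∈ W, πp (C.br w v) ∈ W) ↔
      (∀ v₁ ∈ W, ∀ v₂ ∈ W, C.br v₁ v₂ ∈ Vp) :=
  parallel_iff_bracket_condition_general C Vp Vm W hWVp horth hVmPerp hWiso hWmax πp hπ1 hπ3
end

section
/- In a compact positive SKT manifold, the Laplacians of the three operators in the decomposition d^H = δ₊^N + δ̄₊^N + đ₋ coincide up to factor: Δ_{δ₊^N} = Δ_{δ̄₊^N} = (1/4)Δ^H, where (δ₊^N)* = −δ̄₊^N. Consequently the d^H-Laplacian preserves each subspace 𝒲₊^{k,l} of the (ℤ × ℤ₂)-grading of forms, and the d^H-cohomology inherits a ℤ × ℤ₂ grading. -/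
/-!
Grade by `ℤ × Bool`, with `Bool` the additive group `ℤ₂` (Mathlib's Boolean ring structure,
in which `l + true = !l`). The operators `a`, `b`, `c` are homogeneous of degrees `(2, 1)`,
`(-2, 1)`, `(0, 1)`, so `(d^H)² = 0` splits into five homogeneous pieces of the distinct
degrees `(±4, 0)`, `(±2, 0)`, `(0, 0)`, each of which must vanish: `a² = b² = 0` and
`ab + ba + c² = 0`. With these, `Δ_a = Δ_b = -(ab + ba) = c²` and `Δ^H = 4c²` are ring
identities, and `c²` has degree `(0, 0)`.
-/

open Function

section Degree

variable {ι R M : Type*} [AddCommMonoid ι] [Semiring R] [AddCommMonoid M] [Module R M]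

def HasDegree (W : ι → Submodule R M) (d : ι) (f : Module.End R M) : Prop :=
  ∀ i, Set.MapsTo f (W i) (W (i + d))

namespace HasDegree

variable {W : ι → Submodule R M} {d e : ι} {f g : Module.End R M}

theorem add (hf : HasDegree W d f) (hg : HasDegree W d g) : HasDegree W d (f + g) :=
  fun i _ hφ => add_mem (hf i hφ) (hg i hφ)

theorem mul {k : ι} (hf : HasDegree W d f) (hg : HasDegree W e g) (hk : d + e = k) :
    HasDegree W k (f * g) :=
  fun i _ hφ => by
    rw [← hk, add_comm d, ← add_assoc]
    exact hf (i + e) (hg i hφ)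

end HasDegree

theorem hasDegree_of_mapsTo_not {W : ℤ → Bool → Submodule R M} {n : ℤ} {f : Module.End R M}
    (hf : ∀ k l, ∀ φ ∈ W k l, f φ ∈ W (k + n) (!l)) :
    HasDegree (fun i => W i.1 i.2) (n, true) f := by
  rintro ⟨k, l⟩ φ hφ
  cases l <;> exact hf k _ φ hφ

end Degree

section Vanishing

variable {ι R M : Type*} [AddCommMonoid ι] [Ring R] [AddCommGroup M] [Module R M]

theorem HasDegree.eq_zero_of_sum_eq_zero [IsLeftCancelAdd ι] [DecidableEq ι] {κ : Type*}
    [Fintype κ] {W : ι → Submodule R M} (hW : DirectSum.IsInternal W) {deg : κ → ι}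
    (hdeg : Injective deg) {F : κ → Module.End R M} (hF : ∀ j, HasDegree W (deg j) (F j))
    (hsum : ∑ j, F j = 0) (j : κ) : F j = 0 := by
  refine LinearMap.ext_on (s := ⋃ i, (W i : Set M))
    (by rw [← Submodule.iSup_eq_span, hW.submodule_iSup_eq_top]) ?_
  rintro φ ⟨_, ⟨i, rfl⟩, hφ⟩
  have hind : iSupIndep (fun j => W (i + deg j)) :=
    hW.submodule_iSupIndep.comp (f := fun j => i + deg j) ((add_right_injective i).comp hdeg)
  exact (iSupIndep_iff_finsetSum_eq_zero_imp_eq_zero _).1 hind Finset.univ (fun j => F j φ)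
    (fun j _ => hF j i hφ) (by simpa using congr($hsum φ)) j (Finset.mem_univ j)

theorem components_eq_zero_of_sq_eq_zero {W : ℤ × Bool → Submodule R M}
    (hW : DirectSum.IsInternal W) {n : ℤ} (hn : n ≠ 0) {a b c : Module.End R M}
    (ha : HasDegree W (n, true) a) (hb : HasDegree W (-n, true) b)
    (hc : HasDegree W (0, true) c) (hsq : (a + b + c) * (a + b + c) = 0) :
    a * a = 0 ∧ b * b = 0 ∧ a * b + b * a + c * c = 0 := by
  let F : Fin 5 → Module.End R M :=
    ![a * a, a * b + b * a + c * c, b * b, a * c + c * a, b * c + c * b]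
  let deg : Fin 5 → ℤ × Bool :=
    ![(n + n, false), (0, false), (-n + -n, false), (n, false), (-n, false)]
  have hdeg : Injective deg := by
    intro i j h
    fin_cases i <;> fin_cases j <;> simp [deg] at h ⊢ <;> omega
  have hF : ∀ j, HasDegree W (deg j) (F j) := by
    intro j
    fin_cases j
    · exact ha.mul ha rfl
    · exact ((ha.mul hb (by exact Prod.ext (add_neg_cancel n) rfl)).add
        (hb.mul ha (by exact Prod.ext (neg_add_cancel n) rfl))).add (hc.mul hc rfl)
    · exact hb.mul hb rfl
    · exact (ha.mul hc (by exact Prod.ext (add_zero n) rfl)).add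
        (hc.mul ha (by exact Prod.ext (zero_add n) rfl))
    · exact (hb.mul hc (by exact Prod.ext (add_zero (-n)) rfl)).add
        (hc.mul hb (by exact Prod.ext (zero_add (-n)) rfl))
  have hsum : ∑ j, F j = 0 := by
    rw [Fin.sum_univ_five, ← hsq]
    simp only [F, Matrix.cons_val]
    noncomm_ring
  have hzero := HasDegree.eq_zero_of_sum_eq_zero hW hdeg hF hsum
  exact ⟨hzero 0, hzero 2, hzero 1⟩

end Vanishing

section Laplacian

variable {A : Type*} [Ring A]

def laplacian (d dStar : A) : A :=
  d * dStar + dStar * d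

theorem laplacian_neg_swap (a b : A) : laplacian a (-b) = laplacian b (-a) := by
  simp only [laplacian]
  noncomm_ring

theorem laplacian_neg_eq_mul_self {a b c : A} (h : a * b + b * a + c * c = 0) :
    laplacian a (-b) = c * c := by
  rw [laplacian, mul_neg, neg_mul, ← neg_add, ← add_eq_zero_iff_neg_eq.mp h]

theorem laplacian_add_add_eq_four_nsmul {a b c : A} (haa : a * a = 0) (hbb : b * b = 0)
    (h : a * b + b * a + c * c = 0) :
    laplacian (a + b + c) (-b + -a + c) = 4 • (c * c) := by
  have expand : laplacian (a + b + c) (-b + -a + c)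
      = 4 • (c * c) - 2 • (a * a) - 2 • (b * b) - 2 • (a * b + b * a + c * c) := by
    simp only [laplacian]
    noncomm_ring
  rw [expand, haa, hbb, h]
  simp

end Laplacian

theorem SKT_laplacian_identity
    {Λ : Type*} [AddCommGroup Λ] [Module ℂ Λ]
    (W : ℤ → Bool → Submodule ℂ Λ)
    (hW : DirectSum.IsInternal (fun kl : ℤ × Bool => W kl.1 kl.2))
    (a b c : Module.End ℂ Λ)
    -- the components of `d^H` shift the grading by `+2`, `−2`, `0`
    (ha : ∀ k l, ∀ φ ∈ W k l, a φ ∈ W (k + 2) (!l))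
    (hb : ∀ k l, ∀ φ ∈ W k l, b φ ∈ W (k - 2) (!l))
    (hc : ∀ k l, ∀ φ ∈ W k l, c φ ∈ W k (!l))
    -- `d^H = δ₊^N + δ̄₊^N + đ₋` and `(d^H)² = 0`
    (dH : Module.End ℂ Λ) (hdH : dH = a + b + c)
    (hd2 : dH * dH = 0) :
    -- formal adjoints: `(δ₊^N)* = −δ̄₊^N`, `(δ̄₊^N)* = −δ₊^N`, `đ₋* = đ₋`,
    -- hence `d^{H*} = −δ̄₊^N − δ₊^N + đ₋`
    let aStar : Module.End ℂ Λ := -b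
    let bStar : Module.End ℂ Λ := -a
    let dHStar : Module.End ℂ Λ := aStar + bStar + c
    let Δa : Module.End ℂ Λ := a * aStar + aStar * a
    let Δb : Module.End ℂ Λ := b * bStar + bStar * b
    let ΔH : Module.End ℂ Λ := dH * dHStar + dHStar * dH
    -- `Δ_{δ₊^N} = Δ_{δ̄₊^N} = (1/4) Δ^H`
    Δa = Δb ∧ Δa = (4 : ℂ)⁻¹ • ΔH ∧
    -- consequently `Δ^H` preserves each `𝒲₊^{k,l}`, whence the
    -- `ℤ × ℤ₂`-grading of the `d^H`-cohomology
    (∀ k l, ∀ φ ∈ W k l, ΔH φ ∈ W k l) := by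
  intro aStar bStar dHStar Δa Δb ΔH
  obtain ⟨haa, hbb, hmid⟩ := components_eq_zero_of_sq_eq_zero hW two_ne_zero
    (hasDegree_of_mapsTo_not ha) (hasDegree_of_mapsTo_not hb)
    (hasDegree_of_mapsTo_not fun k l φ hφ => by simpa using hc k l φ hφ) (hdH ▸ hd2)
  have hΔa : Δa = c * c := laplacian_neg_eq_mul_self hmid
  have hΔH : ΔH = (4 : ℂ) • (c * c) := by
    rw [ofNat_smul_eq_nsmul ℂ 4, ← laplacian_add_add_eq_four_nsmul haa hbb hmid, ← hdH]
    rfl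
  refine ⟨laplacian_neg_swap a b, ?_, ?_⟩
  · rw [hΔa, hΔH, inv_smul_smul₀ (by norm_num)]
  · intro k l φ hφ
    rw [hΔH]
    refine Submodule.smul_mem _ _ ?_
    simpa using hc _ _ _ (hc k l φ hφ)
end
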